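/- Let z₀ ∈ ℂ and let f and g be meromorphic in a neighborhood of z₀, each having a zero at z₀, of multiplicities m and m' respectively, with m ≥ 2 and m' ≥ 2. Then the function H := f'/(f−1) − g'/(g−1) is holomorphic at z₀ and vanishes at z₀ to order at least min(m, m') − 1. -/

import Mathlib

open MeasureTheory Filter Set Asymptotics Metric

noncomputable section
open scoped Classical

/-- The order of a meromorphic function at a point, as an integer
(zeros give positive values, poles negative; junk value `0` otherwise). -/
def mord (f : ℂ → ℂ) (z : ℂ) : ℤ :=
  if h : MeromorphicAt f z then WithTop.untopD 0 (meromorphicOrderAt f z) else 0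

/-- The zero divisor `ν⁰_f` of a meromorphic function. -/
def zeroDiv (f : ℂ → ℂ) (z : ℂ) : ℤ := max (mord f z) 0

/-- The pole divisor `ν^∞_f` of a meromorphic function. -/
def poleDiv (f : ℂ → ℂ) (z : ℂ) : ℤ := max (-(mord f z)) 0

/-- The (unintegrated) counting function `n(t, ν)` of a divisor. -/
def couN (ν : ℂ → ℤ) (t : ℝ) : ℝ := ∑ᶠ z ∈ {z : ℂ | ‖z‖ ≤ t}, (ν z : ℝ)

/-- The Nevanlinna counting function `N(r, ν)` of a divisor. -/
def cou (ν : ℂ → ℤ) (r : ℝ) : ℝ := ∫ t in (1:ℝ)..r, couN ν t / t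

/-- The Nevanlinna proximity function `m(r, f)`. -/
def prox (f : ℂ → ℂ) (r : ℝ) : ℝ :=
  (2 * Real.pi)⁻¹ * ∫ θ in (0:ℝ)..(2 * Real.pi),
    max 0 (Real.log ‖f (r * Complex.exp (θ * Complex.I))‖)

/-- The Nevanlinna characteristic function `T(r, f)`. -/
def nevT (f : ℂ → ℂ) (r : ℝ) : ℝ := prox f r + cou (poleDiv f) r

/-- A locally finite (discrete) subset of `ℂ`. -/
def LocFin (S : Set ℂ) : Prop := ∀ t : ℝ, (S ∩ closedBall 0 t).Finite

/-- Equality of meromorphic functions: the two functions agree outside a discrete set. -/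
def MEq (u v : ℂ → ℂ) : Prop := ∃ D : Set ℂ, LocFin D ∧ ∀ z ∉ D, u z = v z

/-- An exceptional set: a Borel subset of `ℝ` of finite Lebesgue measure. -/
def ExcSet (E : Set ℝ) : Prop := MeasurableSet E ∧ volume E < ⊤

/-- `a` is a small function with respect to `f`:
`a` is meromorphic and `‖ T(r,a) = o(T(r,f))`. -/
def SmallFn (a f : ℂ → ℂ) : Prop :=
  MeromorphicOn a Set.univ ∧
    ∃ E : Set ℝ, ExcSet E ∧ nevT a =o[atTop ⊓ 𝓟 Eᶜ] nevT f

/-- `1/(k+1)` for `k : ℕ∞`, with the convention `1/(∞+1) = 0`. -/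
def kinv (k : ℕ∞) : ℝ := ((k + 1).toNat : ℝ)⁻¹

/-- The truncation of a (nonnegative) divisor used in `E^S_{n,k)}(a,f)`:
multiplicities `m ≤ k` are counted `min (m, n+1)` times, multiplicities `m > k`
are disregarded. -/
def truncDiv (n : ℕ) (k : ℕ∞) (ν : ℂ → ℤ) (z : ℂ) : ℤ :=
  if ((ν z).toNat : ℕ∞) ≤ k then min (ν z) (n + 1) else 0

/-- The divisor of `a`-points of `f`, where `a : Option (ℂ → ℂ)` and `none` stands for `∞`. -/
def targDiv (f : ℂ → ℂ) (a : Option (ℂ → ℂ)) : ℂ → ℤ :=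
  fun z =>
    match a with
    | some a => zeroDiv (fun w => f w - a w) z
    | none => poleDiv f z

/-- `f` and `g` weakly share `a` with bi-weight `(n, k)`: there is a discrete set `S`
with `‖ N(r,S) = o(T(r,f)+T(r,g))` outside of which the truncated divisors of
`a`-points of `f` and of `g` agree. -/
def WeaklyShare (f g : ℂ → ℂ) (a : Option (ℂ → ℂ)) (n : ℕ) (k : ℕ∞) : Prop :=
  ∃ S : Set ℂ, LocFin S ∧
    (∃ E : Set ℝ, ExcSet E ∧
      (cou fun z => if z ∈ S then 1 else 0) =o[atTop ⊓ 𝓟 Eᶜ]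
        fun r => nevT f r + nevT g r) ∧
    ∀ z ∉ S, truncDiv n k (targDiv f a) z = truncDiv n k (targDiv g a) z

/-- `f` is a quasi-Möbius transformation of `g`. -/
def QuasiMobius (f g : ℂ → ℂ) : Prop :=
  ∃ a b c d : ℂ → ℂ,
    SmallFn a f ∧ SmallFn b f ∧ SmallFn c f ∧ SmallFn d f ∧
    SmallFn a g ∧ SmallFn b g ∧ SmallFn c g ∧ SmallFn d g ∧
    ¬ MEq (fun z => a z * d z - b z * c z) (fun _ => 0) ∧
    MEq f (fun z => (a z * g z + b z) / (c z * g z + d z))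

/-- `f` is a Möbius transformation of `g`. -/
def Mobius (f g : ℂ → ℂ) : Prop :=
  ∃ a b c d : ℂ, a * d - b * c ≠ 0 ∧
    MEq f (fun z => (a * g z + b) / (c * g z + d))

/-- `f` is a non-constant meromorphic function on `ℂ`. -/
def NonConstMero (f : ℂ → ℂ) : Prop :=
  MeromorphicOn f Set.univ ∧ ¬ ∃ c : ℂ, MEq f (fun _ => c)

/-- The divisor computing `N̄_{(ℓ,k)}(r, ν)`: points with `ℓ ≤ ν(z) ≤ k` counted once. -/
def redTrunc (ℓ : ℕ) (k : ℕ∞) (ν : ℂ → ℤ) (z : ℂ) : ℤ :=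
  if (ℓ : ℤ) ≤ ν z ∧ ((ν z).toNat : ℕ∞) ≤ k then 1 else 0

/-- The reduced divisor `min (ν, 1)` (for nonnegative `ν`). -/
def redDiv (ν : ℂ → ℤ) (z : ℂ) : ℤ := if 0 < ν z then 1 else 0

/-! Since `f z₀ = 0`, the factor `1 / (f - 1)` is analytic and nonvanishing at `z₀`, so
`f' / (f - 1)` has the same order as `f'`, namely `m - 1`; likewise for `g`, and the order of a
difference is at least the smaller of the two orders. -/

section

variable {𝕜 : Type*} [NontriviallyNormedField 𝕜] {u v : 𝕜 → 𝕜} {z₀ : 𝕜}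

theorem analyticOrderAt_div_of_ne_zero (hu : AnalyticAt 𝕜 u z₀) (hv : AnalyticAt 𝕜 v z₀)
    (hv₀ : v z₀ ≠ 0) : analyticOrderAt (u / v) z₀ = analyticOrderAt u z₀ := by
  have hv_inv : analyticOrderAt v⁻¹ z₀ = 0 :=
    analyticOrderAt_eq_zero.mpr (.inr (by simpa using hv₀))
  rw [div_eq_mul_inv, analyticOrderAt_mul hu (hv.inv hv₀), hv_inv, add_zero]

variable [CompleteSpace 𝕜] {f : 𝕜 → 𝕜}

theorem AnalyticAt.deriv_div_sub_one (hf : AnalyticAt 𝕜 f z₀) (hf₁ : f z₀ ≠ 1) :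
    AnalyticAt 𝕜 (fun z => deriv f z / (f z - 1)) z₀ :=
  hf.deriv.div (hf.sub analyticAt_const) (sub_ne_zero.mpr hf₁)

theorem AnalyticAt.analyticOrderAt_deriv_div_sub_one [CharZero 𝕜] (hf : AnalyticAt 𝕜 f z₀) {n : ℕ}
    (hfn : analyticOrderAt f z₀ = n + 1) :
    analyticOrderAt (fun z => deriv f z / (f z - 1)) z₀ = n := by
  have hf₀ : f z₀ = 0 := (analyticOrderAt_ne_zero.mp (by simp [hfn])).2
  rw [← analyticOrderAt_deriv_of_pos hf hfn]
  exact analyticOrderAt_div_of_ne_zero (u := deriv f) (v := fun z => f z - 1) hf.deriv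
    (hf.sub analyticAt_const) (by simp [hf₀])

end

theorem auxiliary_local_vanishing
    (z₀ : ℂ) (f g : ℂ → ℂ) (m m' : ℕ)
    (hf : AnalyticAt ℂ f z₀) (hg : AnalyticAt ℂ g z₀)
    (hfm : analyticOrderAt f z₀ = (m : ℕ∞)) (hgm : analyticOrderAt g z₀ = (m' : ℕ∞))
    (hm : 2 ≤ m) (hm' : 2 ≤ m') :
    ∃ hH : AnalyticAt ℂ (fun z => deriv f z / (f z - 1) - deriv g z / (g z - 1)) z₀,
      ((min m m' - 1 : ℕ) : ℕ∞) ≤ analyticOrderAt (fun z => deriv f z / (f z - 1) - deriv g z / (g z - 1)) z₀ := by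
  obtain ⟨n, rfl⟩ : ∃ n, m = n + 1 := ⟨m - 1, by omega⟩
  obtain ⟨n', rfl⟩ : ∃ n', m' = n' + 1 := ⟨m' - 1, by omega⟩
  have hf₀ : f z₀ = 0 := (analyticOrderAt_ne_zero.mp (by simp [hfm])).2
  have hg₀ : g z₀ = 0 := (analyticOrderAt_ne_zero.mp (by simp [hgm])).2
  refine ⟨(hf.deriv_div_sub_one (by simp [hf₀])).sub (hg.deriv_div_sub_one (by simp [hg₀])), ?_⟩
  calc ((min (n + 1) (n' + 1) - 1 : ℕ) : ℕ∞)
      = min (analyticOrderAt (fun z => deriv f z / (f z - 1)) z₀)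
          (analyticOrderAt (fun z => deriv g z / (g z - 1)) z₀) := by
        rw [hf.analyticOrderAt_deriv_div_sub_one (by simpa using hfm),
          hg.analyticOrderAt_deriv_div_sub_one (by simpa using hgm),
          show min (n + 1) (n' + 1) - 1 = min n n' by omega]
        norm_cast
    _ ≤ _ := le_analyticOrderAt_sub

end
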